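/- Let s, d be natural numbers, C : Fin s → ℕ, r ≥ 0 a real number, and define the extended rate function ρ : (Fin s → ℤ) → ℝ by ρ(S) = r · ∏_k b(S k, C k), where b(a, c) = choose a.toNat c if a ≥ 0 and 0 otherwise. Let S : Fin s → ℤ, let O : Fin d → Fin s → ℤ be stoichiometry vectors with positive parts O⁺ j k = max(O j k, 0) and negative parts O⁻ j k = min(O j k, 0), fix a reaction index i, and let eL, eN : Fin d → ℕ satisfy eL j ≤ eN j for all j. Writing δ(n) = min(n, 1), the following two inequalities hold: (1) ρ(S + ∑_j (eL j) • O⁺ j) ≤ ρ(S + ∑_j (eN j) • O⁺ j); (2) ρ(S + ∑_j (eL j) • O⁻ j − δ(eL i) • O⁻ i) ≥ ρ(S + ∑_j (eN j) • O⁻ j − δ(eN i) • O⁻ i). -/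

import Mathlib

/-! The rate is monotone in the state, so both inequalities reduce to comparing the shifted
states componentwise. For C2 the correction `δ(e i) • O⁻ i` just lowers the `i`-th count by one
(truncated at `0`), and `e ↦ update e i (e i - 1)` is again monotone. -/

/-- Binomial coefficient extended to an integer upper argument: `0` when negative. -/
noncomputable def extBinom (a : ℤ) (c : ℕ) : ℝ :=
  if 0 ≤ a then (a.toNat.choose c : ℝ) else 0

/-- The extended rate function of a reaction with input counts `C` and rate constant
`r` at state `S`: `r · ∏ k, extBinom (S k) (C k)`. -/
noncomputable def extRate (s : ℕ) (C : Fin s → ℕ) (r : ℝ) (S : Fin s → ℤ) : ℝ :=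
  r * ∏ k, extBinom (S k) (C k)

open Finset

lemma extBinom_nonneg (a : ℤ) (c : ℕ) : 0 ≤ extBinom a c := by
  unfold extBinom; split <;> positivity

lemma monotone_extBinom (c : ℕ) : Monotone (extBinom · c) := by
  intro a b hab
  by_cases ha : 0 ≤ a
  · simp only [extBinom, if_pos ha, if_pos (ha.trans hab)]
    exact_mod_cast Nat.choose_le_choose c (Int.toNat_le_toNat hab)
  · simp only [extBinom, if_neg ha]
    exact extBinom_nonneg b c

lemma monotone_extRate (s : ℕ) (C : Fin s → ℕ) {r : ℝ} (hr : 0 ≤ r) :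
    Monotone (extRate s C r) := fun _ _ hAB =>
  mul_le_mul_of_nonneg_left
    (prod_le_prod (fun _ _ => extBinom_nonneg _ _) fun k _ => monotone_extBinom _ (hAB k)) hr

section WeightedSums

variable {ι M : Type*}

lemma monotone_update_pred [DecidableEq ι] (i : ι) :
    Monotone fun e : ι → ℕ => Function.update e i (e i - 1) :=
  fun _ _ he => update_le_update_iff.2 ⟨Nat.sub_le_sub_right (he i) 1, fun j _ => he j⟩

variable [Fintype ι]

lemma monotone_sum_nsmul [AddCommMonoid M] [PartialOrder M] [IsOrderedAddMonoid M]
    {v : ι → M} (hv : ∀ j, 0 ≤ v j) : Monotone fun e : ι → ℕ => ∑ j, e j • v j :=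
  fun _ _ he => sum_le_sum fun j _ => nsmul_le_nsmul_left (hv j) (he j)

lemma antitone_sum_nsmul [AddCommMonoid M] [PartialOrder M] [IsOrderedAddMonoid M]
    {v : ι → M} (hv : ∀ j, v j ≤ 0) : Antitone fun e : ι → ℕ => ∑ j, e j • v j :=
  fun _ _ he => sum_le_sum fun j _ => nsmul_le_nsmul_left_of_nonpos (hv j) (he j)

lemma sum_nsmul_sub_min_one_nsmul_eq_sum_update [DecidableEq ι] [AddCommGroup M]
    (e : ι → ℕ) (v : ι → M) (i : ι) :
    ∑ j, e j • v j - min (e i) 1 • v i = ∑ j, Function.update e i (e i - 1) j • v j := by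
  have split_off_one : e i = (e i - 1) + min (e i) 1 := by omega
  rw [sub_eq_iff_eq_add, ← add_sum_erase _ _ (mem_univ i), ← add_sum_erase _ _ (mem_univ i),
    Function.update_self, add_right_comm, ← add_smul, ← split_off_one]
  congr 1
  exact sum_congr rfl fun j hj => by rw [Function.update_of_ne (ne_of_mem_erase hj)]

end WeightedSums

/-- Inheritance of the stopping conditions C1 and C2 by the left child node, whose
occurrence counts `eL` are componentwise at most those of the parent `eN`.
Here `δ(n) = min n 1`. -/
theorem extRate_left_child (s d : ℕ) (C : Fin s → ℕ) (r : ℝ) (hr : 0 ≤ r)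
    (S : Fin s → ℤ) (O : Fin d → Fin s → ℤ) (i : Fin d) (eL eN : Fin d → ℕ)
    (he : ∀ j, eL j ≤ eN j) :
    (extRate s C r (S + ∑ j, (eL j) • fun k => max (O j k) 0) ≤
      extRate s C r (S + ∑ j, (eN j) • fun k => max (O j k) 0)) ∧
    (extRate s C r
        (S + (∑ j, (eL j) • fun k => min (O j k) 0) -
          (min (eL i) 1) • fun k => min (O i k) 0) ≥
      extRate s C r
        (S + (∑ j, (eN j) • fun k => min (O j k) 0) -
          (min (eN i) 1) • fun k => min (O i k) 0)) := by
  have hpos : ∀ j, (0 : Fin s → ℤ) ≤ fun k => max (O j k) 0 := fun j k => le_max_right _ _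
  have hneg : ∀ j, (fun k => min (O j k) 0) ≤ (0 : Fin s → ℤ) := fun j k => min_le_right _ _
  refine ⟨monotone_extRate s C hr (add_le_add_right (monotone_sum_nsmul hpos he) S), ?_⟩
  rw [add_sub_assoc, add_sub_assoc, sum_nsmul_sub_min_one_nsmul_eq_sum_update,
    sum_nsmul_sub_min_one_nsmul_eq_sum_update]
  exact monotone_extRate s C hr
    (add_le_add_right (antitone_sum_nsmul hneg (monotone_update_pred i he)) S)
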